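/- arXiv:2509.08798 — 8 statements merged into one kernel-verified Lean document; each statement's English description precedes it below -/
import Mathlib

section
/- Let G = (V, E) be a finite simple graph and let A, B ⊆ V be independent offensive alliances of G such that A can be transformed into B by one token sliding step. Then for the unique vertices x ∈ A ∖ B and y ∈ B ∖ A, the pair {x, y} is an edge of G and N[x] = {x, y} = N[y]; that is, {x, y} is an isolated edge (both endpoints have degree one). -/
open Finset

variable {V : Type*}

section Defs

variable [Fintype V] [DecidableEq V] (G : SimpleGraph V) [DecidableRel G.Adj]

/-- `NbrsIn G A v` is the number of neighbors of `v` lying in `A` (denoted `d_A(v)`). -/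
def NbrsIn (A : Finset V) (v : V) : ℕ := (A.filter (fun u => G.Adj v u)).card

/-- The boundary `∂A = N(A) ∖ A`: vertices outside `A` with a neighbor in `A`. -/
def Bdry (A : Finset V) : Finset V :=
  Finset.univ.filter (fun v => v ∉ A ∧ ∃ u ∈ A, G.Adj v u)

/-- `A` is a defensive alliance: `d_A(v) + 1 ≥ d_{V∖A}(v)` for every `v ∈ A`. -/
def DefAll (A : Finset V) : Prop := ∀ v ∈ A, NbrsIn G A v + 1 ≥ NbrsIn G Aᶜ v

/-- `A` is an offensive alliance: `d_A(v) ≥ d_{V∖A}(v) + 1` for every `v ∈ ∂A`. -/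
def OffAll (A : Finset V) : Prop := ∀ v ∈ Bdry G A, NbrsIn G A v ≥ NbrsIn G Aᶜ v + 1

/-- `A` is a powerful alliance: both a defensive and an offensive alliance. -/
def PowAll (A : Finset V) : Prop := DefAll G A ∧ OffAll G A

/-- `A` is a dominating set: every vertex is in `A` or has a neighbor in `A`. -/
def DomSet (A : Finset V) : Prop := ∀ v : V, v ∈ A ∨ ∃ u ∈ A, G.Adj v u

/-- `A` is an independent set. -/
def IndSet (A : Finset V) : Prop := ∀ u ∈ A, ∀ w ∈ A, ¬ G.Adj u w

/-- The set of leaves (vertices of degree one) of `G`. -/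
def Leaves : Finset V := Finset.univ.filter (fun v => G.degree v = 1)

/-- `Z(X) = {v ∈ V ∖ N[X] : N(v) ⊆ L ∪ ∂X}`. -/
def ZSet (X : Finset V) : Finset V :=
  Finset.univ.filter (fun v => v ∉ X ∧ (∀ u ∈ X, ¬ G.Adj v u) ∧
    G.neighborFinset v ⊆ Leaves G ∪ Bdry G X)

/-- `Y(X) = N[X] ∪ Z(X) ∪ L`. -/
def YSet (X : Finset V) : Finset V := (X ∪ Bdry G X) ∪ ZSet G X ∪ Leaves G

/-- Global independent offensive alliance: offensive alliance that is dominating and independent. -/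
def GIOA (A : Finset V) : Prop := OffAll G A ∧ DomSet G A ∧ IndSet G A

end Defs

/-- The induced subgraph `G^{≤r}` on vertices of degree at most `r` (modelled as a
graph on all of `V` whose edges are the edges of `G` with both endpoints of degree `≤ r`). -/
def GLE [Fintype V] (G : SimpleGraph V) [DecidableRel G.Adj] (r : ℕ) : SimpleGraph V where
  Adj u w := G.Adj u w ∧ G.degree u ≤ r ∧ G.degree w ≤ r
  symm := ⟨fun u w h => ⟨h.1.symm, h.2.2, h.2.1⟩⟩
  loopless := ⟨fun u h => G.loopless.irrefl u h.1⟩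

section Steps

variable [DecidableEq V]

/-- Token jumping step: `|A| = |B|` and `|A ∖ B| = 1`. -/
def TJStep (A B : Finset V) : Prop := A.card = B.card ∧ (A \ B).card = 1

/-- Token addition step: `A ⊆ B` and `|B ∖ A| = 1`. -/
def TAStep (A B : Finset V) : Prop := A ⊆ B ∧ (B \ A).card = 1

/-- Token removal step: `B ⊆ A` and `|A ∖ B| = 1`. -/
def TRStep (A B : Finset V) : Prop := B ⊆ A ∧ (A \ B).card = 1

/-- Token addition/removal (TAR) step. -/
def TARStep (A B : Finset V) : Prop := TAStep A B ∨ TRStep A B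

/-- `f 0, f 1, …, f (n-1)` is a reconfiguration sequence (with `n` members, i.e. of
length `n`) from `A` to `B` for step relation `step`, all of whose members satisfy `X`. -/
def SeqOn (step : Finset V → Finset V → Prop) (X : Finset V → Prop)
    (f : ℕ → Finset V) (A B : Finset V) (n : ℕ) : Prop :=
  1 ≤ n ∧ f 0 = A ∧ f (n - 1) = B ∧
    (∀ i, i + 1 < n → step (f i) (f (i + 1))) ∧ (∀ i, i < n → X (f i))

/-- There is an `X`-`step` reconfiguration sequence of length `n` from `A` to `B`. -/
def IsSeq (step : Finset V → Finset V → Prop) (X : Finset V → Prop)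
    (A B : Finset V) (n : ℕ) : Prop :=
  ∃ f : ℕ → Finset V, SeqOn step X f A B n

/-- `X` is reconfiguration monotone increasing (rmi). -/
def Rmi (X : Finset V → Prop) : Prop :=
  ∀ A B : Finset V, X A → X B → TJStep A B → ∀ v ∈ B \ A, X (insert v A)

/-- `X` is reconfiguration monotone decreasing (rmd). -/
def Rmd (X : Finset V → Prop) : Prop :=
  ∀ A B : Finset V, X A → X B → TJStep A B → ∀ v ∈ A \ B, X (A.erase v)

end Steps

/-!
Since `A` is independent, the only neighbour of `x` in `B` is `y`, so `d_B(x) = 1`. As `x ∈ ∂B`,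
the offensive condition `d_B(x) ≥ d_{V∖B}(x) + 1` leaves no neighbour of `x` outside `B`, hence
`N(x) = {y}`. Exchanging the roles of `A` and `B` gives `N(y) = {x}`.
-/

theorem IndSet.notMem_of_adj {V : Type*} {G : SimpleGraph V} {A : Finset V} (hA : IndSet G A)
    {x u : V} (hx : x ∈ A) (hxu : G.Adj x u) : u ∉ A :=
  fun hu => hA x hx u hu hxu

section Alliances

variable {V : Type*} [Fintype V] [DecidableEq V] {G : SimpleGraph V} [DecidableRel G.Adj]

theorem OffAll.mem_of_adj_of_nbrsIn_le_one {B : Finset V} (hB : OffAll G B) {x u : V}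
    (hx : x ∈ Bdry G B) (hxB : NbrsIn G B x ≤ 1) (hxu : G.Adj x u) : u ∈ B := by
  have hout : NbrsIn G Bᶜ x = 0 := by have := hB x hx; omega
  by_contra hu
  have hmem : u ∈ Bᶜ.filter (G.Adj x) := mem_filter.mpr ⟨mem_compl.mpr hu, hxu⟩
  exact (card_pos.mpr ⟨u, hmem⟩).ne' hout

theorem eq_of_adj_of_sdiff_eq_singleton {A B : Finset V} (hA : IndSet G A) (hB : OffAll G B)
    {x y : V} (hx : A \ B = {x}) (hy : B \ A = {y}) (hxy : G.Adj x y) {u : V}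
    (hxu : G.Adj x u) : u = y := by
  have hxA : x ∈ A ∧ x ∉ B := mem_sdiff.mp (hx ▸ mem_singleton_self x)
  have hyB : y ∈ B := (mem_sdiff.mp (hy ▸ mem_singleton_self y)).1
  have nbr_mem_sdiff : ∀ v ∈ B, G.Adj x v → v ∈ B \ A := fun v hv hxv =>
    mem_sdiff.mpr ⟨hv, hA.notMem_of_adj hxA.1 hxv⟩
  have hbdry : x ∈ Bdry G B := by simpa [Bdry] using ⟨hxA.2, y, hyB, hxy⟩
  have hdeg : NbrsIn G B x ≤ 1 := by
    rw [NbrsIn, ← card_singleton y, ← hy]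
    exact card_le_card fun v hv => nbr_mem_sdiff v (mem_filter.mp hv).1 (mem_filter.mp hv).2
  have hu := nbr_mem_sdiff u (hB.mem_of_adj_of_nbrsIn_le_one hbdry hdeg hxu) hxu
  rwa [hy, mem_singleton] at hu

theorem insert_neighborFinset_eq_pair {x y : V} (hxy : G.Adj x y)
    (hnbr : ∀ u, G.Adj x u → u = y) : insert x (G.neighborFinset x) = {x, y} := by
  ext u
  simp only [mem_insert, SimpleGraph.mem_neighborFinset, mem_singleton]
  constructor
  · rintro (rfl | hxu)
    exacts [Or.inl rfl, Or.inr (hnbr u hxu)]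
  · rintro (rfl | rfl)
    exacts [Or.inl rfl, Or.inr hxy]

end Alliances

theorem stmt_0_general {V : Type*} [Fintype V] [DecidableEq V]
    (G : SimpleGraph V) [DecidableRel G.Adj] (A B : Finset V)
    (hAoff : OffAll G A) (hAind : IndSet G A)
    (hBoff : OffAll G B) (hBind : IndSet G B)
    (x y : V) (hx : A \ B = {x}) (hy : B \ A = {y}) (hadj : G.Adj x y) :
    G.Adj x y ∧ insert x (G.neighborFinset x) = ({x, y} : Finset V) ∧
      insert y (G.neighborFinset y) = ({x, y} : Finset V) := by
  have hNx : ∀ u, G.Adj x u → u = y := fun _ =>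
    eq_of_adj_of_sdiff_eq_singleton hAind hBoff hx hy hadj
  have hNy : ∀ u, G.Adj y u → u = x := fun _ =>
    eq_of_adj_of_sdiff_eq_singleton hBind hAoff hy hx hadj.symm
  exact ⟨hadj, insert_neighborFinset_eq_pair hadj hNx,
    pair_comm y x ▸ insert_neighborFinset_eq_pair hadj.symm hNy⟩

theorem stmt_0 {V : Type*} [Fintype V] [DecidableEq V]
    (G : SimpleGraph V) [DecidableRel G.Adj] (A B : Finset V)
    (hAoff : OffAll G A) (hAind : IndSet G A)
    (hBoff : OffAll G B) (hBind : IndSet G B)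
    (hTJ : TJStep A B)
    (x y : V) (hx : A \ B = {x}) (hy : B \ A = {y}) (hadj : G.Adj x y) :
    G.Adj x y ∧ insert x (G.neighborFinset x) = ({x, y} : Finset V) ∧
      insert y (G.neighborFinset y) = ({x, y} : Finset V) :=
  stmt_0_general G A B hAoff hAind hBoff hBind x y hx hy hadj
end

section
/- Let G = (V, E) be a finite simple graph, let X be a reconfiguration monotone increasing property of vertex sets, and let A_s, A_t ⊆ V satisfy X with |A_s| = |A_t| = k. Then there exists an X-TJ sequence from A_s to A_t of length at most ℓ if and only if there exists an X-TAR sequence from A_s to A_t with threshold k + 1 of length at most 2ℓ. -/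
open Finset

variable {V : Type*}

/-!
A TJ step `A → C` factors as the addition `A ⊊ A ∪ C` followed by a removal, and rmi is exactly
what makes `A ∪ C` satisfy `X`; this turns a TJ sequence of length `ℓ` into a TAR sequence of
length `2ℓ - 1` with threshold `k + 1`.

Conversely, in a TAR sequence every valley `D ⊋ C ⊊ E` can be replaced by the peak
`D ⊊ D ∪ E ⊋ E` of the same length (rmi again, since `D` and `E` differ by a TJ step), or cut out
when `D = E`. Once no valley is left, a TAR sequence between two `k`-sets with threshold `k + 1`
alternates between sizes `k` and `k + 1`, and each peak `A ⊊ C ⊋ D` is either a TJ step `A → D`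
or a detour with `A = D`.
-/
section TokenSteps

variable [DecidableEq V] {A C D E : Finset V}

lemma TAStep.card_eq (h : TAStep A C) : C.card = A.card + 1 := by
  have := card_sdiff_add_card_eq_card h.1
  rw [h.2] at this
  omega

lemma TRStep.card_eq (h : TRStep A C) : A.card = C.card + 1 :=
  TAStep.card_eq h

lemma eq_or_tjStep_of_card_eq (hcard : A.card = D.card) (h : (A \ D).card ≤ 1) :
    A = D ∨ TJStep A D := by
  by_cases hAD : A ⊆ D
  · exact .inl (eq_of_subset_of_card_le hAD hcard.ge)
  · exact .inr ⟨hcard, le_antisymm h (card_pos.2 (sdiff_nonempty.2 hAD))⟩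

lemma eq_or_tjStep_of_taStep_trStep (hAC : TAStep A C) (hCD : TRStep C D) :
    A = D ∨ TJStep A D := by
  refine eq_or_tjStep_of_card_eq (by have := hAC.card_eq; have := hCD.card_eq; omega) ?_
  exact hCD.2 ▸ card_le_card (sdiff_subset_sdiff hAC.1 le_rfl)

lemma eq_or_tjStep_of_trStep_taStep (hDC : TRStep D C) (hCE : TAStep C E) :
    D = E ∨ TJStep D E := by
  refine eq_or_tjStep_of_card_eq (by have := hDC.card_eq; have := hCE.card_eq; omega) ?_
  exact hDC.2 ▸ card_le_card (sdiff_subset_sdiff le_rfl hCE.1)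

lemma TJStep.taStep_union (h : TJStep A C) : TAStep A (A ∪ C) :=
  ⟨subset_union_left, by rw [union_sdiff_left, ← card_sdiff_comm h.1]; exact h.2⟩

lemma TJStep.trStep_union (h : TJStep A C) : TRStep (A ∪ C) C :=
  ⟨subset_union_right, by rw [union_sdiff_right]; exact h.2⟩

lemma Rmi.union {X : Finset V → Prop} (hX : Rmi X) (hA : X A) (hC : X C) (h : TJStep A C) :
    X (A ∪ C) := by
  obtain ⟨w, hw⟩ := card_eq_one.1 h.taStep_union.2
  rw [union_sdiff_left] at hw
  have hAC : A ∪ C = insert w A := by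
    rw [← union_sdiff_self_eq_union, hw, union_comm, ← insert_eq]
  exact hAC ▸ hX A C hA hC h w (hw ▸ mem_singleton_self w)

end TokenSteps

section Sequences

variable {step : Finset V → Finset V → Prop} {X : Finset V → Prop} {A B C : Finset V} {n : ℕ}

lemma IsSeq.one_le (h : IsSeq step X A B n) : 1 ≤ n := by
  obtain ⟨_, h1, -⟩ := h
  exact h1

lemma IsSeq.prop_left (h : IsSeq step X A B n) : X A := by
  obtain ⟨f, h1, hA, -, -, hX⟩ := h
  exact hA ▸ hX 0 h1

lemma isSeq_one_iff : IsSeq step X A B 1 ↔ X A ∧ A = B := by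
  constructor
  · rintro ⟨f, -, hA, hB, -, hX⟩
    exact ⟨hA ▸ hX 0 one_pos, hA ▸ hB⟩
  · rintro ⟨hXA, rfl⟩
    exact ⟨fun _ => A, le_rfl, rfl, rfl, fun i hi => by omega, fun _ _ => hXA⟩

lemma isSeq_add_two_iff :
    IsSeq step X A B (n + 2) ↔ X A ∧ ∃ C, step A C ∧ IsSeq step X C B (n + 1) := by
  constructor
  · rintro ⟨f, -, hA, hB, hstep, hX⟩
    refine ⟨hA ▸ hX 0 (by omega), f 1, hA ▸ hstep 0 (by omega),
      fun i => f (i + 1), by omega, rfl, hB, fun i hi => hstep (i + 1) (by omega),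
      fun i hi => hX (i + 1) (by omega)⟩
  · rintro ⟨hXA, C, hAC, g, -, hC, hB, hstep, hX⟩
    refine ⟨fun i => Nat.casesOn i A g, by omega, rfl, by simpa using hB, ?_, ?_⟩
    · rintro (_ | i) hi
      · simpa [hC] using hAC
      · exact hstep i (by omega)
    · rintro (_ | i) hi
      · exact hXA
      · exact hX i (by omega)

lemma IsSeq.cons (hA : X A) (hAC : step A C) (h : IsSeq step X C B n) :
    IsSeq step X A B (n + 1) := by
  obtain ⟨m, rfl⟩ : ∃ m, n = m + 1 := ⟨n - 1, by have := h.one_le; omega⟩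
  exact isSeq_add_two_iff.2 ⟨hA, C, hAC, h⟩

end Sequences

section Threshold

variable [DecidableEq V] {X : Finset V → Prop} {A B : Finset V} {k t : ℕ}

theorem IsSeq.tarStep_of_tjStep (hX : Rmi X) :
    ∀ {n : ℕ} {A : Finset V}, IsSeq TJStep X A B n → A.card = k →
      IsSeq TARStep (fun S => X S ∧ S.card ≤ k + 1) A B (2 * n - 1)
  | 0, _, h, _ => absurd h.one_le (by omega)
  | 1, _, h, hA => by
    obtain ⟨hXA, rfl⟩ := isSeq_one_iff.1 h
    exact isSeq_one_iff.2 ⟨⟨hXA, by omega⟩, rfl⟩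
  | n + 2, A, h, hA => by
    obtain ⟨hXA, C, hAC, hC⟩ := isSeq_add_two_iff.1 h
    have hCB := hC.tarStep_of_tjStep hX (hAC.1 ▸ hA)
    have hunion : (A ∪ C).card = k + 1 := hA ▸ hAC.taStep_union.card_eq
    rw [show 2 * (n + 2) - 1 = 2 * (n + 1) - 1 + 1 + 1 by omega]
    refine (hCB.cons ⟨hX.union hXA hC.prop_left hAC, hunion.le⟩ (.inr hAC.trStep_union)).cons
      ⟨hXA, by omega⟩ (.inl hAC.taStep_union)

/-- A valley `D ⊋ C ⊊ E` can be replaced by the peak `D ⊊ D ∪ E ⊋ E`, or cut out if `D = E`. -/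
lemma IsSeq.lift_valley (hX : Rmi X) :
    ∀ {n : ℕ} {C D : Finset V}, IsSeq TARStep (fun S => X S ∧ S.card ≤ t) C B n →
      TRStep D C → X D → D.card < t → D.card ≤ B.card →
      (∃ m ≤ n, IsSeq TARStep (fun S => X S ∧ S.card ≤ t) D B m) ∨
        ∃ E, TAStep D E ∧ IsSeq TARStep (fun S => X S ∧ S.card ≤ t) E B n
  | 0, _, _, h, _, _, _, _ => absurd h.one_le (by omega)
  | 1, C, D, h, hDC, _, _, hDB => by
    obtain ⟨-, rfl⟩ := isSeq_one_iff.1 h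
    have := hDC.card_eq
    omega
  | n + 2, C, D, h, hDC, hXD, hDt, hDB => by
    obtain ⟨hXC, C', hCC', hC'⟩ := isSeq_add_two_iff.1 h
    have hup : (∃ m ≤ n + 2, IsSeq TARStep (fun S => X S ∧ S.card ≤ t) D B m) ∨
        ∃ E, TAStep C E ∧ IsSeq TARStep (fun S => X S ∧ S.card ≤ t) E B (n + 1) := by
      rcases hCC' with hCC' | hCC'
      · exact .inr ⟨C', hCC', hC'⟩
      · have := hDC.card_eq
        refine (hC'.lift_valley hX hCC' hXC.1 (by omega) (by omega)).imp ?_ id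
        rintro ⟨m, hm, hCB⟩
        exact ⟨m + 1, by omega, hCB.cons ⟨hXD, by omega⟩ (.inr hDC)⟩
    obtain ⟨m, hm, hDB⟩ | ⟨E, hCE, hEB⟩ := hup
    · exact .inl ⟨m, hm, hDB⟩
    rcases eq_or_tjStep_of_trStep_taStep hDC hCE with rfl | hDE
    · exact .inl ⟨n + 1, by omega, hEB⟩
    · have hunion : (D ∪ E).card = D.card + 1 := hDE.taStep_union.card_eq
      exact .inr ⟨D ∪ E, hDE.taStep_union,
        hEB.cons ⟨hX.union hXD hEB.prop_left.1 hDE, by omega⟩ (.inr hDE.trStep_union)⟩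

theorem IsSeq.tjStep_of_tarStep (hX : Rmi X) {n : ℕ}
    (h : IsSeq TARStep (fun S => X S ∧ S.card ≤ k + 1) A B n) (hA : A.card = k)
    (hB : B.card = k) : ∃ m, 2 * m ≤ n + 1 ∧ IsSeq TJStep X A B m := by
  induction n using Nat.strong_induction_on generalizing A with
  | _ n ih =>
  obtain _ | _ | n := n
  · exact absurd h.one_le (by omega)
  · obtain ⟨hXA, rfl⟩ := isSeq_one_iff.1 h
    exact ⟨1, le_rfl, isSeq_one_iff.2 ⟨hXA.1, rfl⟩⟩
  obtain ⟨hXA, C, hAC, hC⟩ := isSeq_add_two_iff.1 h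
  have hup : (∃ m < n + 2, IsSeq TARStep (fun S => X S ∧ S.card ≤ k + 1) A B m) ∨
      ∃ C, TAStep A C ∧ IsSeq TARStep (fun S => X S ∧ S.card ≤ k + 1) C B (n + 1) := by
    rcases hAC with hAC | hAC
    · exact .inr ⟨C, hAC, hC⟩
    · refine (hC.lift_valley hX hAC hXA.1 (by omega) (by omega)).imp ?_ id
      rintro ⟨m, hm, hAB⟩
      exact ⟨m, by omega, hAB⟩
  obtain ⟨m, hm, hAB⟩ | ⟨C, hAC, hC⟩ := hup
  · obtain ⟨m', hm', hAB'⟩ := ih m hm hAB hA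
    exact ⟨m', by omega, hAB'⟩
  obtain _ | n := n
  · obtain ⟨-, rfl⟩ := isSeq_one_iff.1 hC
    have := hAC.card_eq
    omega
  obtain ⟨hXC, D, hCD, hD⟩ := isSeq_add_two_iff.1 hC
  have hCD : TRStep C D := hCD.resolve_left fun hadd => by
    have := hAC.card_eq; have := hadd.card_eq; have := hD.prop_left.2
    omega
  rcases eq_or_tjStep_of_taStep_trStep hAC hCD with rfl | hAD
  · obtain ⟨m, hm, hAB⟩ := ih (n + 1) (by omega) hD hA
    exact ⟨m, by omega, hAB⟩
  · obtain ⟨m, hm, hDB⟩ := ih (n + 1) (by omega) hD (hAD.1 ▸ hA)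
    exact ⟨m + 1, by omega, hDB.cons hXA.1 hAD⟩

end Threshold

theorem stmt_3_general {V : Type*} [DecidableEq V]
    (X : Finset V → Prop) (hrmi : Rmi X)
    (A_s A_t : Finset V) (k ℓ : ℕ)
    (hks : A_s.card = k) (hkt : A_t.card = k) :
    (∃ n ≤ ℓ, IsSeq TJStep X A_s A_t n) ↔
      (∃ n ≤ 2 * ℓ, IsSeq TARStep (fun S => X S ∧ S.card ≤ k + 1) A_s A_t n) := by
  constructor
  · rintro ⟨n, hn, h⟩
    exact ⟨2 * n - 1, by omega, h.tarStep_of_tjStep hrmi hks⟩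
  · rintro ⟨n, hn, h⟩
    obtain ⟨m, hm, h'⟩ := h.tjStep_of_tarStep hrmi hks hkt
    exact ⟨m, by omega, h'⟩

theorem stmt_3 {V : Type*} [Fintype V] [DecidableEq V]
    (G : SimpleGraph V) [DecidableRel G.Adj]
    (X : Finset V → Prop) (hrmi : Rmi X)
    (A_s A_t : Finset V) (k ℓ : ℕ)
    (hs : X A_s) (ht : X A_t) (hks : A_s.card = k) (hkt : A_t.card = k) :
    (∃ n ≤ ℓ, IsSeq TJStep X A_s A_t n) ↔
      (∃ n ≤ 2 * ℓ, IsSeq TARStep (fun S => X S ∧ S.card ≤ k + 1) A_s A_t n) :=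
  stmt_3_general X hrmi A_s A_t k ℓ hks hkt
end

section
/- Let G = (V, E) be a finite simple graph. The property of being an offensive alliance is reconfiguration monotone increasing: if A and B are offensive alliances of G such that B is obtained from A by one token jumping step, and v is the unique vertex of B ∖ A, then A ∪ {v} is an offensive alliance. -/
open Finset

variable {V : Type*}

/-! After a token jump `A → B` adding `v`, the set `A ∪ {v}` equals `A ∪ B`, so it suffices that
offensive alliances are closed under union: a boundary vertex of `A ∪ B` is a boundary vertex of
`A` (say), and passing from `A` to `A ∪ B` can only raise `d_A(u)` and lower `d_{V∖A}(u)`. -/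

lemma nbrsIn_mono {G : SimpleGraph V} [DecidableRel G.Adj] {A B : Finset V} (h : A ⊆ B)
    (v : V) : NbrsIn G A v ≤ NbrsIn G B v :=
  card_le_card (filter_subset_filter _ h)

section OffensiveAlliance

variable [Fintype V] [DecidableEq V] {G : SimpleGraph V} [DecidableRel G.Adj]

lemma bdry_union_subset (A B : Finset V) : Bdry G (A ∪ B) ⊆ Bdry G A ∪ Bdry G B := by
  intro u hu
  simp only [Bdry, mem_filter, mem_univ, true_and, mem_union, not_or] at hu ⊢
  obtain ⟨⟨huA, huB⟩, w, hw | hw, hadj⟩ := hu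
  · exact .inl ⟨huA, w, hw, hadj⟩
  · exact .inr ⟨huB, w, hw, hadj⟩

lemma OffAll.le_of_subset {A C : Finset V} (hA : OffAll G A) (hAC : A ⊆ C) {u : V}
    (hu : u ∈ Bdry G A) : NbrsIn G Cᶜ u + 1 ≤ NbrsIn G C u :=
  calc NbrsIn G Cᶜ u + 1 ≤ NbrsIn G Aᶜ u + 1 := by
        gcongr; exact nbrsIn_mono (compl_subset_compl.mpr hAC) u
    _ ≤ NbrsIn G A u := hA u hu
    _ ≤ NbrsIn G C u := nbrsIn_mono hAC u

lemma OffAll.union {A B : Finset V} (hA : OffAll G A) (hB : OffAll G B) :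
    OffAll G (A ∪ B) := by
  intro u hu
  rcases mem_union.mp (bdry_union_subset A B hu) with huA | huB
  · exact hA.le_of_subset subset_union_left huA
  · exact hB.le_of_subset subset_union_right huB

end OffensiveAlliance

lemma TJStep.insert_eq_union [DecidableEq V] {A B : Finset V} (h : TJStep A B) {v : V}
    (hv : v ∈ B \ A) : insert v A = A ∪ B := by
  have hcard : (B \ A).card = 1 := by rw [card_sdiff_comm h.1.symm]; exact h.2
  obtain ⟨w, hw⟩ := card_eq_one.mp hcard
  rw [hw, mem_singleton] at hv
  rw [← union_sdiff_self_eq_union, hw, hv, union_comm, ← insert_eq]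

theorem stmt_5 {V : Type*} [Fintype V] [DecidableEq V]
    (G : SimpleGraph V) [DecidableRel G.Adj] :
    Rmi (fun A : Finset V => OffAll G A) := by
  intro A B hA hB hTJ v hv
  rw [hTJ.insert_eq_union hv]
  exact hA.union hB
end

section
/- Let G = (V, E) be a finite simple graph. The property of being a powerful alliance is reconfiguration monotone increasing: if A and B are powerful alliances of G such that B is obtained from A by one token jumping step, and v is the unique vertex of B ∖ A, then A ∪ {v} is a powerful alliance. -/
open Finset

variable {V : Type*}

/-!
Since `B ∖ A = {v}`, the set `A ∪ {v}` is `A ∪ B`, and defensive and offensive alliances are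
closed under union: enlarging the set can only raise `d_A(u)` and lower `d_{V∖A}(u)`, and a
boundary vertex of `A ∪ B` lies on the boundary of `A` or of `B`.
-/

namespace Alliance

lemma nbrsIn_mono {G : SimpleGraph V} [DecidableRel G.Adj] {A C : Finset V} (h : A ⊆ C)
    (u : V) : NbrsIn G A u ≤ NbrsIn G C u :=
  card_le_card (filter_subset_filter _ h)

variable [Fintype V] [DecidableEq V] {G : SimpleGraph V} [DecidableRel G.Adj]

lemma nbrsIn_compl_union_le_left (A B : Finset V) (u : V) :
    NbrsIn G (A ∪ B)ᶜ u ≤ NbrsIn G Aᶜ u :=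
  nbrsIn_mono (compl_subset_compl.mpr subset_union_left) u

lemma nbrsIn_compl_union_le_right (A B : Finset V) (u : V) :
    NbrsIn G (A ∪ B)ᶜ u ≤ NbrsIn G Bᶜ u :=
  nbrsIn_mono (compl_subset_compl.mpr subset_union_right) u

lemma mem_bdry_union {A B : Finset V} {u : V} (hu : u ∈ Bdry G (A ∪ B)) :
    u ∈ Bdry G A ∨ u ∈ Bdry G B := by
  simp only [Bdry, mem_filter, mem_univ, true_and, mem_union, not_or] at hu ⊢
  obtain ⟨⟨huA, huB⟩, x, hx | hx, hadj⟩ := hu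
  · exact .inl ⟨huA, x, hx, hadj⟩
  · exact .inr ⟨huB, x, hx, hadj⟩

lemma DefAll.union {A B : Finset V} (hA : DefAll G A) (hB : DefAll G B) :
    DefAll G (A ∪ B) := by
  intro u hu
  rcases mem_union.mp hu with hu | hu
  · calc NbrsIn G (A ∪ B)ᶜ u ≤ NbrsIn G Aᶜ u := nbrsIn_compl_union_le_left A B u
      _ ≤ NbrsIn G A u + 1 := hA u hu
      _ ≤ NbrsIn G (A ∪ B) u + 1 := by gcongr; exact nbrsIn_mono subset_union_left u
  · calc NbrsIn G (A ∪ B)ᶜ u ≤ NbrsIn G Bᶜ u := nbrsIn_compl_union_le_right A B u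
      _ ≤ NbrsIn G B u + 1 := hB u hu
      _ ≤ NbrsIn G (A ∪ B) u + 1 := by gcongr; exact nbrsIn_mono subset_union_right u

lemma OffAll.union {A B : Finset V} (hA : OffAll G A) (hB : OffAll G B) :
    OffAll G (A ∪ B) := by
  intro u hu
  rcases mem_bdry_union hu with hu | hu
  · calc NbrsIn G (A ∪ B)ᶜ u + 1 ≤ NbrsIn G Aᶜ u + 1 := by
          gcongr; exact nbrsIn_compl_union_le_left A B u
      _ ≤ NbrsIn G A u := hA u hu
      _ ≤ NbrsIn G (A ∪ B) u := nbrsIn_mono subset_union_left u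
  · calc NbrsIn G (A ∪ B)ᶜ u + 1 ≤ NbrsIn G Bᶜ u + 1 := by
          gcongr; exact nbrsIn_compl_union_le_right A B u
      _ ≤ NbrsIn G B u := hB u hu
      _ ≤ NbrsIn G (A ∪ B) u := nbrsIn_mono subset_union_right u

lemma PowAll.union {A B : Finset V} (hA : PowAll G A) (hB : PowAll G B) :
    PowAll G (A ∪ B) :=
  ⟨DefAll.union hA.1 hB.1, OffAll.union hA.2 hB.2⟩

end Alliance

open Alliance in
theorem stmt_6 {V : Type*} [Fintype V] [DecidableEq V]
    (G : SimpleGraph V) [DecidableRel G.Adj] :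
    Rmi (fun A : Finset V => PowAll G A) := by
  intro A B hA hB hTJ v hv
  rw [hTJ.insert_eq_union hv]
  exact hA.union hB
end

section
/- Let G = (V, E) be a finite simple graph and let A ⊆ V be a global independent offensive alliance. Then for every v ∈ A, the set A ∖ {v} is not a dominating set, and for every u ∈ V ∖ A, the set A ∪ {u} is not an independent set. Consequently, for any two distinct global independent offensive alliances A_s ≠ A_t of G, there is no TAR sequence from A_s to A_t all of whose members are global independent offensive alliances. -/
open Finset

variable {V : Type*}

/-! A global independent offensive alliance is independent and dominating, hence a maximal
independent set: adding a vertex breaks independence and removing one breaks domination.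
So no TAR step joins two such sets, and every TAR sequence through them is constant. -/

theorem IsSeq.eq_of_forall_not_step {step : Finset V → Finset V → Prop} {X : Finset V → Prop}
    (hstep : ∀ A B, X A → X B → ¬ step A B) {A B : Finset V} {n : ℕ}
    (h : IsSeq step X A B n) : A = B := by
  obtain ⟨f, hn, rfl, rfl, hf, hX⟩ := h
  rcases Nat.lt_or_ge n 2 with hn2 | hn2
  · rw [show n - 1 = 0 by omega]
  · exact absurd (hf 0 (by omega)) (hstep _ _ (hX 0 (by omega)) (hX 1 (by omega)))

theorem TAStep.exists_insert_eq [DecidableEq V] {A B : Finset V} (h : TAStep A B) :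
    ∃ u ∉ A, insert u A = B :=
  exists_eq_insert_iff.mpr
    ⟨h.1, by have := card_sdiff_of_subset h.1; have := card_le_card h.1; have := h.2; omega⟩

section Graph

variable [DecidableEq V] {G : SimpleGraph V} {A B : Finset V}

theorem IndSet.not_domSet_erase (hA : IndSet G A) {v : V} (hv : v ∈ A) :
    ¬ DomSet G (A.erase v) := by
  intro hdom
  rcases hdom v with hv' | ⟨u, hu, hvu⟩
  · exact notMem_erase v A hv'
  · exact hA v hv u (mem_of_mem_erase hu) hvu

theorem DomSet.not_indSet_insert (hA : DomSet G A) {u : V} (hu : u ∉ A) :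
    ¬ IndSet G (insert u A) := by
  intro hind
  rcases hA u with hu' | ⟨w, hw, huw⟩
  · exact hu hu'
  · exact hind u (mem_insert_self u A) w (mem_insert_of_mem hw) huw

theorem GIOA.not_taStep [Fintype V] [DecidableRel G.Adj] (hA : GIOA G A) (hB : GIOA G B) :
    ¬ TAStep A B := by
  intro hAB
  obtain ⟨u, hu, rfl⟩ := hAB.exists_insert_eq
  exact hA.2.1.not_indSet_insert hu hB.2.2

-- A removal step from `A` to `B` is, by definition, an addition step from `B` to `A`.
theorem GIOA.not_tarStep [Fintype V] [DecidableRel G.Adj] (hA : GIOA G A) (hB : GIOA G B) :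
    ¬ TARStep A B := by
  rintro (hAB | hBA)
  · exact hA.not_taStep hB hAB
  · exact hB.not_taStep hA hBA

end Graph

theorem stmt_10 {V : Type*} [Fintype V] [DecidableEq V]
    (G : SimpleGraph V) [DecidableRel G.Adj]
    (A : Finset V) (hA : GIOA G A) :
    (∀ v ∈ A, ¬ DomSet G (A.erase v)) ∧
      (∀ u : V, u ∉ A → ¬ IndSet G (insert u A)) ∧
      (∀ A_s A_t : Finset V, GIOA G A_s → GIOA G A_t → A_s ≠ A_t →
        ¬ ∃ n, IsSeq TARStep (fun S => GIOA G S) A_s A_t n) := by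
  refine ⟨fun v hv => hA.2.2.not_domSet_erase hv, fun u hu => hA.2.1.not_indSet_insert hu, ?_⟩
  rintro A_s A_t - - hne ⟨n, hseq⟩
  exact hne (hseq.eq_of_forall_not_step fun _ _ hS hT => hS.not_tarStep hT)
end

section
/- Let G = (V, E) be a finite simple graph and let A, B ⊆ V be offensive alliances of G such that there exists an offensive-alliance TAR sequence from A to B, or an offensive-alliance TJ sequence from A to B. Then Y(A) = Y(B), where for X ⊆ V, Y(X) = N[X] ∪ Z(X) ∪ L with L the set of leaves of G and Z(X) = {v ∈ V ∖ N[X] : N(v) ⊆ L ∪ ∂X}. -/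
/-!
`Y(X)` is monotone in `X`. Conversely, let `X = S ∪ {v}` be an offensive alliance. A vertex of
`∂X` with no neighbour in `S` has exactly one neighbour in `X`, so the alliance inequality leaves
it no neighbour outside `X`: it is a leaf. Hence `∂X ⊆ L ∪ ∂S`, and this inclusion is all that is
needed to show `Y(X) ⊆ Y(S)`. Across a TAR or TJ step between offensive alliances `A` and `B`,
both `A ∖ B` and `B ∖ A` have at most one element, so `Y(A) = Y(A ∩ B) = Y(B)`, and `Y` is
constant along the sequence.
-/

open Finset

variable {V : Type*}

section Alliance

variable {G : SimpleGraph V} [DecidableRel G.Adj] {A B S T : Finset V} {v : V}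

lemma nbrsIn_pos_iff : 0 < NbrsIn G A v ↔ ∃ u ∈ A, G.Adj v u := by
  simp [NbrsIn, card_pos, filter_nonempty_iff]

@[simp]
lemma mem_Leaves [Fintype V] : v ∈ Leaves G ↔ G.degree v = 1 := by
  simp [Leaves]

variable [DecidableEq V]

lemma nbrsIn_insert_le (S : Finset V) (v u : V) : NbrsIn G (insert v S) u ≤ NbrsIn G S u + 1 := by
  rw [NbrsIn, NbrsIn, filter_insert]
  split
  · exact card_insert_le _ _
  · exact Nat.le_succ _

variable [Fintype V]

@[simp]
lemma mem_Bdry : v ∈ Bdry G A ↔ v ∉ A ∧ ∃ u ∈ A, G.Adj v u := by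
  simp [Bdry]

@[simp]
lemma mem_ZSet :
    v ∈ ZSet G A ↔ v ∉ A ∧ (∀ u ∈ A, ¬ G.Adj v u) ∧ G.neighborFinset v ⊆ Leaves G ∪ Bdry G A := by
  simp [ZSet]

lemma mem_YSet : v ∈ YSet G A ↔ v ∈ A ∨ v ∈ Bdry G A ∨ v ∈ ZSet G A ∨ v ∈ Leaves G := by
  simp only [YSet, mem_union, or_assoc]

variable (G) in
lemma nbrsIn_add_nbrsIn_compl (A : Finset V) (v : V) :
    NbrsIn G A v + NbrsIn G Aᶜ v = G.degree v := by
  rw [NbrsIn, NbrsIn, ← card_union_of_disjoint (disjoint_filter_filter disjoint_compl_right),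
    ← filter_union, union_compl, SimpleGraph.degree, SimpleGraph.neighborFinset_eq_filter]

lemma YSet_mono (hST : S ⊆ T) : YSet G S ⊆ YSet G T := by
  intro w hw
  rw [mem_YSet] at hw ⊢
  rcases hw with hwS | hwS | hwZ | hwL
  · exact .inl (hST hwS)
  · obtain ⟨-, a, haS, hwa⟩ := mem_Bdry.1 hwS
    by_cases hwT : w ∈ T
    · exact .inl hwT
    · exact .inr (.inl (mem_Bdry.2 ⟨hwT, a, hST haS, hwa⟩))
  · obtain ⟨-, -, hN⟩ := mem_ZSet.1 hwZ
    by_cases hwT : w ∈ T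
    · exact .inl hwT
    by_cases hwadj : ∃ a ∈ T, G.Adj w a
    · exact .inr (.inl (mem_Bdry.2 ⟨hwT, hwadj⟩))
    push Not at hwadj
    refine .inr (.inr (.inl (mem_ZSet.2 ⟨hwT, hwadj, fun x hx => ?_⟩)))
    have hwx : G.Adj w x := (G.mem_neighborFinset w x).1 hx
    rcases mem_union.1 (hN hx) with hxL | hxS
    · exact mem_union_left _ hxL
    · obtain ⟨-, a, haS, hxa⟩ := mem_Bdry.1 hxS
      exact mem_union_right _ (mem_Bdry.2 ⟨fun hxT => hwadj x hxT hwx, a, hST haS, hxa⟩)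
  · exact .inr (.inr (.inr hwL))

namespace OffAll

lemma bdry_insert_subset (hX : OffAll G (insert v S)) :
    Bdry G (insert v S) ⊆ Leaves G ∪ Bdry G S := by
  intro u hu
  obtain ⟨huX, huadj⟩ := mem_Bdry.1 hu
  by_cases hS : ∃ a ∈ S, G.Adj u a
  · exact mem_union_right _ (mem_Bdry.2 ⟨fun huS => huX (mem_insert_of_mem huS), hS⟩)
  have hS0 : NbrsIn G S u = 0 := Nat.eq_zero_of_not_pos (mt nbrsIn_pos_iff.1 hS)
  have hin_pos : 0 < NbrsIn G (insert v S) u := nbrsIn_pos_iff.2 huadj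
  have hin_le := nbrsIn_insert_le (G := G) S v u
  have hdeg := nbrsIn_add_nbrsIn_compl G (insert v S) u
  have hoff := hX u hu
  exact mem_union_left _ (mem_Leaves.2 (by omega))

lemma YSet_insert_subset (hX : OffAll G (insert v S)) : YSet G (insert v S) ⊆ YSet G S := by
  have hLB : Leaves G ∪ Bdry G (insert v S) ⊆ Leaves G ∪ Bdry G S :=
    union_subset subset_union_left hX.bdry_insert_subset
  intro w hw
  rw [mem_YSet] at hw ⊢
  rcases hw with hwX | hwB | hwZ | hwL
  · rcases mem_insert.1 hwX with rfl | hwS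
    · by_cases hwS : w ∈ S
      · exact .inl hwS
      by_cases hwadj : ∃ a ∈ S, G.Adj w a
      · exact .inr (.inl (mem_Bdry.2 ⟨hwS, hwadj⟩))
      push Not at hwadj
      refine .inr (.inr (.inl (mem_ZSet.2 ⟨hwS, hwadj, fun x hx => hLB (mem_union_right _ ?_)⟩)))
      have hwx : G.Adj w x := (G.mem_neighborFinset w x).1 hx
      refine mem_Bdry.2 ⟨fun hxX => ?_, w, mem_insert_self w S, hwx.symm⟩
      rcases mem_insert.1 hxX with rfl | hxS
      · exact G.loopless.irrefl x hwx
      · exact hwadj x hxS hwx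
    · exact .inl hwS
  · rcases mem_union.1 (hX.bdry_insert_subset hwB) with hwL | hwB
    · exact .inr (.inr (.inr hwL))
    · exact .inr (.inl hwB)
  · obtain ⟨hwX, hwadj, hN⟩ := mem_ZSet.1 hwZ
    exact .inr (.inr (.inl (mem_ZSet.2 ⟨fun hwS => hwX (mem_insert_of_mem hwS),
      fun a ha => hwadj a (mem_insert_of_mem ha), hN.trans hLB⟩)))
  · exact .inr (.inr (.inr hwL))

lemma YSet_insert (hX : OffAll G (insert v S)) : YSet G (insert v S) = YSet G S :=
  hX.YSet_insert_subset.antisymm (YSet_mono (subset_insert v S))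

lemma YSet_eq_YSet_inter (hA : OffAll G A) (hAB : #(A \ B) ≤ 1) : YSet G A = YSet G (A ∩ B) := by
  rcases Nat.le_one_iff_eq_zero_or_eq_one.1 hAB with h0 | h1
  · rw [inter_eq_left.2 (sdiff_eq_empty_iff_subset.1 (card_eq_zero.1 h0))]
  · obtain ⟨a, ha⟩ := card_eq_one.1 h1
    have hA_eq : A = insert a (A ∩ B) := by
      rw [insert_eq, ← ha, sdiff_union_inter]
    have hA' : OffAll G (insert a (A ∩ B)) := by rwa [← hA_eq]
    rw [← hA'.YSet_insert, ← hA_eq]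

lemma YSet_eq_of_card_sdiff_le_one (hA : OffAll G A) (hB : OffAll G B)
    (hAB : #(A \ B) ≤ 1 ∧ #(B \ A) ≤ 1) : YSet G A = YSet G B := by
  rw [hA.YSet_eq_YSet_inter hAB.1, hB.YSet_eq_YSet_inter hAB.2, inter_comm]

end OffAll

end Alliance

section Reconfiguration

variable {A B : Finset V}

lemma IsSeq.eq_of_step {α : Type*} {step : Finset V → Finset V → Prop} {X : Finset V → Prop}
    {n : ℕ} (φ : Finset V → α) (hφ : ∀ C D, X C → X D → step C D → φ C = φ D)
    (h : IsSeq step X A B n) : φ A = φ B := by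
  obtain ⟨f, hn, rfl, rfl, hstep, hX⟩ := h
  suffices ∀ i, i < n → φ (f 0) = φ (f i) from this (n - 1) (by omega)
  intro i
  induction i with
  | zero => exact fun _ => rfl
  | succ i ih =>
    intro hi
    exact (ih (by omega)).trans (hφ _ _ (hX i (by omega)) (hX (i + 1) hi) (hstep i hi))

variable [DecidableEq V]

lemma TARStep.card_sdiff_le_one (h : TARStep A B) : #(A \ B) ≤ 1 ∧ #(B \ A) ≤ 1 := by
  rcases h with ⟨hAB, h⟩ | ⟨hBA, h⟩
  · simp [sdiff_eq_empty_iff_subset.2 hAB, h]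
  · simp [sdiff_eq_empty_iff_subset.2 hBA, h]

lemma TJStep.card_sdiff_le_one (h : TJStep A B) : #(A \ B) ≤ 1 ∧ #(B \ A) ≤ 1 :=
  ⟨h.2.le, (card_sdiff_comm h.1 ▸ h.2).le⟩

end Reconfiguration

theorem stmt_12_general {V : Type*} [Fintype V] [DecidableEq V]
    (G : SimpleGraph V) [DecidableRel G.Adj]
    (A B : Finset V)
    (hseq : (∃ n, IsSeq TARStep (fun S => OffAll G S) A B n) ∨
      (∃ n, IsSeq TJStep (fun S => OffAll G S) A B n)) :
    YSet G A = YSet G B := by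
  rcases hseq with ⟨n, hseq⟩ | ⟨n, hseq⟩ <;>
    exact hseq.eq_of_step (YSet G) fun _ _ hC hD h =>
      OffAll.YSet_eq_of_card_sdiff_le_one hC hD h.card_sdiff_le_one

theorem stmt_12 {V : Type*} [Fintype V] [DecidableEq V]
    (G : SimpleGraph V) [DecidableRel G.Adj]
    (A B : Finset V) (hA : OffAll G A) (hB : OffAll G B)
    (hseq : (∃ n, IsSeq TARStep (fun S => OffAll G S) A B n) ∨
      (∃ n, IsSeq TJStep (fun S => OffAll G S) A B n)) :
    YSet G A = YSet G B :=
  stmt_12_general G A B hseq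
end

section
/- Let G = (V, E) be a finite simple graph, let A ⊆ V be a defensive alliance, and let v, u be vertices of the same type, i.e., N(u) ∖ {v} = N(v) ∖ {u}. If v ∈ A and u ∉ A, then (A ∖ {v}) ∪ {u} is also a defensive alliance. -/
/-!
Because `u` and `v` have the same type, the transposition `(u v)` is an automorphism of `G`;
it carries `A` onto `(A ∖ {v}) ∪ {u}`. Automorphisms preserve every count `d_A(x)`, hence
carry defensive alliances to defensive alliances.
-/

open Finset

variable {V : Type*}

lemma Finset.map_swap_eq_insert_erase [DecidableEq V] {A : Finset V} {u v : V}
    (hv : v ∈ A) (hu : u ∉ A) : A.map (Equiv.swap u v).toEmbedding = insert u (A.erase v) := by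
  ext x
  rw [mem_map_equiv, Equiv.symm_swap, Equiv.swap_apply_def]
  have : u ≠ v := by rintro rfl; exact hu hv
  split_ifs <;> grind

lemma Finset.compl_map_equiv [Fintype V] [DecidableEq V] {W : Type*} [Fintype W] [DecidableEq W]
    (e : V ≃ W) (A : Finset V) : (A.map e.toEmbedding)ᶜ = Aᶜ.map e.toEmbedding := by
  ext; simp [mem_map_equiv]

namespace SimpleGraph

def swapIso [DecidableEq V] {G : SimpleGraph V} {u v : V}
    (h : G.neighborSet u \ {v} = G.neighborSet v \ {u}) : G ≃g G where
  toEquiv := Equiv.swap u v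
  map_rel_iff' := by
    intro a b
    have key : ∀ x, x ≠ u → x ≠ v → (G.Adj u x ↔ G.Adj v x) := by
      intro x hxu hxv
      simpa [hxu, hxv] using congrArg (x ∈ ·) h
    simp only [Equiv.swap_apply_def]
    split_ifs <;> grind [SimpleGraph.adj_comm, SimpleGraph.irrefl]

variable {W : Type*} {G : SimpleGraph V} {H : SimpleGraph W}
  [DecidableRel G.Adj] [DecidableRel H.Adj]

lemma Iso.nbrsIn_map (φ : G ≃g H) (A : Finset V) (w : V) :
    NbrsIn H (A.map φ.toEquiv.toEmbedding) (φ w) = NbrsIn G A w := by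
  rw [NbrsIn, NbrsIn, Finset.filter_map, Finset.card_map]
  congr 2
  ext x
  exact φ.map_adj_iff

lemma Iso.defAll_map [Fintype V] [DecidableEq V] [Fintype W] [DecidableEq W] (φ : G ≃g H)
    {A : Finset V} (hA : DefAll G A) : DefAll H (A.map φ.toEquiv.toEmbedding) := by
  intro x hx
  obtain ⟨w, hw, rfl⟩ := Finset.mem_map.1 hx
  have h := hA w hw
  rw [← φ.nbrsIn_map, ← φ.nbrsIn_map, ← Finset.compl_map_equiv] at h
  exact h

end SimpleGraph

theorem stmt_13 {V : Type*} [Fintype V] [DecidableEq V]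
    (G : SimpleGraph V) [DecidableRel G.Adj]
    (A : Finset V) (hA : DefAll G A) (v u : V)
    (htype : G.neighborFinset u \ {v} = G.neighborFinset v \ {u})
    (hv : v ∈ A) (hu : u ∉ A) :
    DefAll G (insert u (A.erase v)) := by
  have hset : G.neighborSet u \ {v} = G.neighborSet v \ {u} := by
    simpa using congrArg ((↑) : Finset V → Set V) htype
  rw [← Finset.map_swap_eq_insert_erase hv hu]
  exact (SimpleGraph.swapIso hset).defAll_map hA
end

section
/- Let G = (V, E) be a finite simple graph and let A ⊆ V be a powerful alliance with |A| = k. Then |∂A| ≤ k², every x ∈ ∂A satisfies d_{V∖A}(x) ≤ k − 1, and consequently |N(∂A) ∖ A| ≤ k³. -/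
open Finset

variable {V : Type*}

/-! A member of a defensive alliance `A` has at most `|A|` neighbours outside `A`, and a boundary
vertex of an offensive alliance has fewer outside neighbours than neighbours in `A`, hence at most
`|A| - 1`. Covering `∂A`, resp. `N(∂A) ∖ A`, by these outside neighbourhoods gives the bounds. -/

section PowerfulAlliance

variable (G : SimpleGraph V) [DecidableRel G.Adj]

theorem nbrsIn_le_card (A : Finset V) (v : V) : NbrsIn G A v ≤ A.card :=
  card_filter_le _ _

theorem nbrsIn_le_card_sub_one_of_mem [DecidableEq V] {A : Finset V} {v : V} (hv : v ∈ A) :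
    NbrsIn G A v ≤ A.card - 1 := by
  rw [← card_erase_of_mem hv]
  refine card_le_card fun u hu => ?_
  obtain ⟨huA, hvu⟩ := mem_filter.mp hu
  exact mem_erase.mpr ⟨hvu.ne.symm, huA⟩

variable [Fintype V] [DecidableEq V] {G}

theorem DefAll.nbrsIn_compl_le {A : Finset V} (hA : DefAll G A) {v : V} (hv : v ∈ A) :
    NbrsIn G Aᶜ v ≤ A.card := by
  have := nbrsIn_le_card_sub_one_of_mem G hv
  have := hA v hv
  have := card_pos.mpr ⟨v, hv⟩
  omega

theorem OffAll.nbrsIn_compl_le {A : Finset V} (hA : OffAll G A) {x : V} (hx : x ∈ Bdry G A) :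
    NbrsIn G Aᶜ x ≤ A.card - 1 := by
  have := nbrsIn_le_card G A x
  have := hA x hx
  omega

variable (G)

theorem card_filter_exists_adj_sdiff_le (S A : Finset V) {m : ℕ}
    (hm : ∀ s ∈ S, NbrsIn G Aᶜ s ≤ m) :
    ((univ.filter fun v => ∃ u ∈ S, G.Adj v u) \ A).card ≤ S.card * m := by
  refine (card_le_card fun v hv => ?_).trans
    (card_biUnion_le_card_mul S (fun s => Aᶜ.filter (G.Adj s)) m hm)
  simp only [mem_sdiff, mem_filter, mem_univ, true_and] at hv
  obtain ⟨⟨u, hu, hvu⟩, hvA⟩ := hv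
  exact mem_biUnion.mpr ⟨u, hu, mem_filter.mpr ⟨mem_compl.mpr hvA, hvu.symm⟩⟩

theorem bdry_eq (A : Finset V) : Bdry G A = (univ.filter fun v => ∃ u ∈ A, G.Adj v u) \ A := by
  ext v
  simp only [Bdry, mem_sdiff, mem_filter, mem_univ, true_and]
  tauto

theorem DefAll.card_bdry_le_sq {A : Finset V} (hA : DefAll G A) :
    (Bdry G A).card ≤ A.card ^ 2 := by
  rw [bdry_eq, sq]
  exact card_filter_exists_adj_sdiff_le G A A fun _ hv => hA.nbrsIn_compl_le hv

end PowerfulAlliance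

theorem stmt_18 {V : Type*} [Fintype V] [DecidableEq V]
    (G : SimpleGraph V) [DecidableRel G.Adj]
    (A : Finset V) (hA : PowAll G A) (k : ℕ) (hk : A.card = k) :
    (Bdry G A).card ≤ k ^ 2 ∧
      (∀ x ∈ Bdry G A, NbrsIn G Aᶜ x ≤ k - 1) ∧
      ((Finset.univ.filter (fun v => ∃ u ∈ Bdry G A, G.Adj v u)) \ A).card ≤ k ^ 3 := by
  subst hk
  obtain ⟨hDef, hOff⟩ := hA
  have hBdry := hDef.card_bdry_le_sq
  refine ⟨hBdry, fun x hx => hOff.nbrsIn_compl_le hx, ?_⟩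
  calc _ ≤ (Bdry G A).card * (A.card - 1) :=
        card_filter_exists_adj_sdiff_le G _ A fun _ hx => hOff.nbrsIn_compl_le hx
    _ ≤ A.card ^ 2 * A.card := Nat.mul_le_mul hBdry (Nat.sub_le _ _)
    _ = A.card ^ 3 := by ring
end
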